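/- arXiv:1403.7129 — 3 statements merged into one kernel-verified Lean document; each statement's English description precedes it below -/
import Mathlib

section
/- Let n ≥ 3 and let p ≤ 0 and q ∈ ℝ satisfy p + q > 2/n. Define φ(s) = (s+1)^{-p} and ψ(s) = s(s+1)^{q-1} for s ≥ 0, and G(s) = ∫_{1}^{s} ∫_{1}^{σ} φ(τ)/ψ(τ) dτ dσ for s > 0. Then there exist a > 0 and α > 2/n such that G(s) ≤ a·s^{2-α} for all s ≥ 1. -/
/-!
For `τ ≥ 1` the integrand is `φ τ / ψ τ = (τ + 1) ^ (1 - p - q) / τ ≤ C τ ^ (-p - q) ≤ C τ ^ (-α)`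
for any `α ≤ p + q`. Since `n ≥ 3` we have `2 / n < 1`, so we may take `2 / n < α < 1`; integrating
the power bound twice from `1` then gives `G s ≤ C / ((1 - α) (2 - α)) · s ^ (2 - α)`.
-/

open MeasureTheory intervalIntegral Set

lemma rpow_add_one_le_max_mul_rpow (r : ℝ) {τ : ℝ} (hτ : 1 ≤ τ) :
    (τ + 1) ^ r ≤ max 1 (2 ^ r) * τ ^ r := by
  have hτ0 : 0 < τ := by linarith
  rcases le_or_gt 0 r with hr | hr
  · calc (τ + 1) ^ r ≤ (2 * τ) ^ r := by gcongr; linarith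
      _ = 2 ^ r * τ ^ r := Real.mul_rpow zero_le_two hτ0.le
      _ ≤ max 1 (2 ^ r) * τ ^ r := by gcongr; exact le_max_right _ _
  · calc (τ + 1) ^ r ≤ τ ^ r := Real.rpow_le_rpow_of_nonpos hτ0 (by linarith) hr.le
      _ = 1 * τ ^ r := (one_mul _).symm
      _ ≤ max 1 (2 ^ r) * τ ^ r := by gcongr; exact le_max_left _ _

lemma rpow_div_mul_rpow_le {p q α τ : ℝ} (hα : α ≤ p + q) (hτ : 1 ≤ τ) :
    (τ + 1) ^ (-p) / (τ * (τ + 1) ^ (q - 1)) ≤ max 1 (2 ^ (1 - p - q)) * τ ^ (-α) := by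
  have hτ0 : 0 < τ := by linarith
  have hτ1 : 0 < τ + 1 := by linarith
  calc (τ + 1) ^ (-p) / (τ * (τ + 1) ^ (q - 1)) = (τ + 1) ^ (1 - p - q) / τ := by
        rw [div_eq_div_iff (by positivity) hτ0.ne', mul_comm τ, ← mul_assoc,
          ← Real.rpow_add hτ1, show 1 - p - q + (q - 1) = -p by ring]
    _ ≤ max 1 (2 ^ (1 - p - q)) * τ ^ (1 - p - q) / τ := by
        gcongr; exact rpow_add_one_le_max_mul_rpow _ hτ
    _ = max 1 (2 ^ (1 - p - q)) * τ ^ (-p - q) := by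
        rw [mul_div_assoc, ← Real.rpow_sub_one hτ0.ne']
        ring_nf
    _ ≤ max 1 (2 ^ (1 - p - q)) * τ ^ (-α) := by
        gcongr
        linarith

lemma continuousOn_rpow_div_mul_rpow (p q : ℝ) :
    ContinuousOn (fun τ : ℝ => (τ + 1) ^ (-p) / (τ * (τ + 1) ^ (q - 1))) (Ioi 0) := by
  intro τ (hτ : 0 < τ)
  have hτ1 : ContinuousAt (fun τ : ℝ => τ + 1) τ := by fun_prop
  have h1 : τ + 1 ≠ 0 := by positivity
  exact ContinuousAt.continuousWithinAt ((hτ1.rpow_const (.inl h1)).div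
    (continuousAt_id.mul (hτ1.rpow_const (.inl h1))) (by positivity))

lemma integral_le_of_le_mul_rpow {f : ℝ → ℝ} {c γ s : ℝ} (hc : 0 ≤ c) (hγ : -1 < γ)
    (hs : 1 ≤ s) (hf : IntervalIntegrable f volume 1 s) (hle : ∀ τ ∈ Icc 1 s, f τ ≤ c * τ ^ γ) :
    ∫ τ in (1:ℝ)..s, f τ ≤ c / (γ + 1) * s ^ (γ + 1) := by
  have hγ1 : 0 < γ + 1 := by linarith
  have hpow : IntervalIntegrable (fun τ : ℝ => c * τ ^ γ) volume 1 s :=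
    (intervalIntegral.intervalIntegrable_rpow' hγ).const_mul c
  calc ∫ τ in (1:ℝ)..s, f τ ≤ ∫ τ in (1:ℝ)..s, c * τ ^ γ := integral_mono_on hs hf hpow hle
    _ = c / (γ + 1) * (s ^ (γ + 1) - 1) := by
        rw [intervalIntegral.integral_const_mul, integral_rpow (.inl hγ), Real.one_rpow]
        ring
    _ ≤ c / (γ + 1) * s ^ (γ + 1) := by
        gcongr
        linarith

theorem stmt0_general (n : ℕ) (hn : 3 ≤ n) (p q : ℝ)
    (hpq : 2 / (n : ℝ) < p + q)
    (φ ψ G : ℝ → ℝ)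
    (hφ : ∀ s, φ s = (s + 1) ^ (-p))
    (hψ : ∀ s, ψ s = s * (s + 1) ^ (q - 1))
    (hG : ∀ s, G s = ∫ σ in (1:ℝ)..s, ∫ τ in (1:ℝ)..σ, φ τ / ψ τ) :
    ∃ a > (0:ℝ), ∃ α > 2 / (n : ℝ), ∀ s ≥ (1:ℝ), G s ≤ a * s ^ (2 - α) := by
  have h2n : 2 / (n : ℝ) < 1 := by
    rw [div_lt_one (by positivity)]
    exact_mod_cast hn
  obtain ⟨α, hnα, hα⟩ := exists_between (lt_min hpq h2n)
  have hα1 : α < 1 := hα.trans_le (min_le_right _ _)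
  set C : ℝ := max 1 (2 ^ (1 - p - q))
  have hC : 0 < C := zero_lt_one.trans_le (le_max_left _ _)
  have hint : ∀ σ ≥ (1:ℝ), IntervalIntegrable (fun τ => φ τ / ψ τ) volume 1 σ := fun σ hσ => by
    simp only [hφ, hψ]
    refine ((continuousOn_rpow_div_mul_rpow p q).mono fun τ hτ => ?_).intervalIntegrable
    exact zero_lt_one.trans_le (uIcc_of_le hσ ▸ hτ).1
  have h1α : 0 < 1 - α := by linarith
  have h2α : 0 < 2 - α := by linarith
  have hinner : ∀ σ ≥ (1:ℝ), ∫ τ in (1:ℝ)..σ, φ τ / ψ τ ≤ C / (1 - α) * σ ^ (1 - α) := by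
    intro σ hσ
    have := integral_le_of_le_mul_rpow hC.le (by linarith) hσ (hint σ hσ)
      fun τ hτ => (hφ τ ▸ hψ τ ▸ rpow_div_mul_rpow_le (hα.le.trans (min_le_left _ _)) hτ.1)
    rwa [show -α + 1 = 1 - α by ring] at this
  refine ⟨C / (1 - α) / (2 - α), by positivity, α, hnα, fun s hs => ?_⟩
  have := integral_le_of_le_mul_rpow (c := C / (1 - α)) (γ := 1 - α) (by positivity)
    (by linarith) hs (continuousOn_primitive_interval' (hint s hs) left_mem_uIcc).intervalIntegrable
    fun σ hσ => hinner σ hσ.1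
  rwa [hG, ← show 1 - α + 1 = 2 - α by ring]

theorem stmt0 (n : ℕ) (hn : 3 ≤ n) (p q : ℝ) (hp : p ≤ 0)
    (hpq : 2 / (n : ℝ) < p + q)
    (φ ψ G : ℝ → ℝ)
    (hφ : ∀ s, φ s = (s + 1) ^ (-p))
    (hψ : ∀ s, ψ s = s * (s + 1) ^ (q - 1))
    (hG : ∀ s, G s = ∫ σ in (1:ℝ)..s, ∫ τ in (1:ℝ)..σ, φ τ / ψ τ) :
    ∃ a > (0:ℝ), ∃ α > 2 / (n : ℝ), ∀ s ≥ (1:ℝ), G s ≤ a * s ^ (2 - α) :=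
  stmt0_general n hn p q hpq φ ψ G hφ hψ hG
end

section
/- Let n ≥ 3, p ≤ 0, q ∈ ℝ with p + q > 2/n, and set φ(s) = (s+1)^{-p}, ψ(s) = s(s+1)^{q-1}, G(s) = ∫_{1}^{s} ∫_{1}^{σ} φ(τ)/ψ(τ) dτ dσ, H(s) = ∫_{0}^{s} σφ(σ)/ψ(σ) dσ. Then there exist γ ∈ (0, (n-2)/n) and b > 0 such that H(s) ≤ γ·G(s) + b(s+1) for all s > 0. -/
/-!
Put `β = 1 - (p + q)`, so that `φ τ / ψ τ = (τ + 1) ^ β / τ` and `H s = ∫₀ˢ (σ + 1) ^ β dσ`.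
For `β > 0` the derivative `β (τ + 1) ^ (β - 1)` of `(τ + 1) ^ β` is at most `β φ τ / ψ τ`, hence
`(σ + 1) ^ β ≤ β ∫₁^σ φ / ψ + 2 ^ β` for `σ ≥ 1`; integrating once more gives `H ≤ β G + O(s)`.
For `β ≤ 0` the integrand of `H` is at most `1`. Since `G ≥ 0`, any `γ ≥ max β 0` works, and
`β < 1 - 2 / n` leaves room for `γ = max β ((n - 2) / (2 n)) < (n - 2) / n`.
-/

open MeasureTheory intervalIntegral

theorem integral_integral_nonneg {h : ℝ → ℝ} {a s : ℝ} (hh : ∀ τ ∈ Set.uIcc a s, 0 ≤ h τ) :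
    0 ≤ ∫ σ in a..s, ∫ τ in a..σ, h τ := by
  rcases le_total a s with has | hsa
  · refine integral_nonneg has fun σ hσ => integral_nonneg hσ.1 fun τ hτ => hh τ ?_
    rw [Set.uIcc_of_le has]
    exact ⟨hτ.1, hτ.2.trans hσ.2⟩
  · rw [integral_symm]
    simp only [integral_symm _ a, intervalIntegral.integral_neg, neg_neg]
    refine integral_nonneg hsa fun σ hσ => integral_nonneg hσ.2 fun τ hτ => hh τ ?_
    rw [Set.uIcc_of_ge hsa]
    exact ⟨hσ.1.trans hτ.1, hτ.2⟩

section AddOneRpow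

variable {β γ : ℝ}

theorem intervalIntegrable_add_one_rpow {a b : ℝ} (ha : 0 ≤ a) (hb : 0 ≤ b) :
    IntervalIntegrable (fun σ : ℝ => (σ + 1) ^ β) volume a b := by
  refine (ContinuousOn.rpow_const (by fun_prop) fun x hx => Or.inl ?_).intervalIntegrable
  linarith [(le_min ha hb).trans hx.1]

theorem intervalIntegrable_add_one_rpow_div {a b : ℝ} (ha : 0 < a) (hb : 0 < b) :
    IntervalIntegrable (fun τ : ℝ => (τ + 1) ^ β / τ) volume a b := by
  have hpos : ∀ x ∈ Set.uIcc a b, 0 < x := fun x hx => (lt_min ha hb).trans_le hx.1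
  refine (ContinuousOn.div (ContinuousOn.rpow_const (by fun_prop) fun x hx => Or.inl ?_)
    continuousOn_id fun x hx => (hpos x hx).ne').intervalIntegrable
  linarith [hpos x hx]

theorem add_one_rpow_le_max_one_two_rpow {σ : ℝ} (hσ₀ : 0 ≤ σ) (hσ₁ : σ ≤ 1) :
    (σ + 1) ^ β ≤ max 1 (2 ^ β) := by
  rcases le_total β 0 with hβ | hβ
  · exact (Real.rpow_le_one_of_one_le_of_nonpos (by linarith) hβ).trans (le_max_left _ _)
  · refine (Real.rpow_le_rpow (by linarith) ?_ hβ).trans (le_max_right _ _)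
    linarith

theorem add_one_rpow_sub_two_rpow_le (hβ : 0 ≤ β) {σ : ℝ} (hσ : 1 ≤ σ) :
    (σ + 1) ^ β - 2 ^ β ≤ β * ∫ τ in (1 : ℝ)..σ, (τ + 1) ^ β / τ := by
  have hcont : ContinuousOn (fun τ : ℝ => (τ + 1) ^ β) (Set.Icc 1 σ) :=
    ContinuousOn.rpow_const (by fun_prop) fun x _ => Or.inr hβ
  have hderiv : ∀ x ∈ Set.Ioo 1 σ,
      HasDerivWithinAt (fun τ : ℝ => (τ + 1) ^ β) (β * (x + 1) ^ (β - 1)) (Set.Ioi x) x := by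
    intro x hx
    have := ((hasDerivAt_id' x).add_const 1).rpow_const (p := β) (Or.inl (by linarith [hx.1]))
    simpa using this.hasDerivWithinAt
  have hint : IntegrableOn (fun τ : ℝ => β * ((τ + 1) ^ β / τ)) (Set.Icc 1 σ) :=
    (intervalIntegrable_iff_integrableOn_Icc_of_le hσ).1
      ((intervalIntegrable_add_one_rpow_div one_pos (by linarith)).const_mul β)
  have hle : ∀ x ∈ Set.Ioo 1 σ, β * (x + 1) ^ (β - 1) ≤ β * ((x + 1) ^ β / x) := by
    intro x hx
    have hx₀ : 0 < x := zero_lt_one.trans hx.1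
    refine mul_le_mul_of_nonneg_left ?_ hβ
    rw [Real.rpow_sub_one (by linarith)]
    exact div_le_div_of_nonneg_left (by positivity) hx₀ (by linarith)
  have := sub_le_integral_of_hasDeriv_right_of_le hσ hcont hderiv hint hle
  rw [intervalIntegral.integral_const_mul, one_add_one_eq_two] at this
  exact this

theorem add_one_rpow_le_mul_integral_add (hβγ : β ≤ γ) (hγ : 0 ≤ γ) {σ : ℝ} (hσ : 1 ≤ σ) :
    (σ + 1) ^ β ≤ γ * (∫ τ in (1 : ℝ)..σ, (τ + 1) ^ β / τ) + max 1 (2 ^ β) := by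
  have hI : 0 ≤ ∫ τ in (1 : ℝ)..σ, (τ + 1) ^ β / τ :=
    integral_nonneg hσ fun τ hτ => by have := hτ.1; positivity
  have hγI := mul_nonneg hγ hI
  rcases le_total β 0 with hβ | hβ
  · have := Real.rpow_le_one_of_one_le_of_nonpos (by linarith : (1 : ℝ) ≤ σ + 1) hβ
    linarith [le_max_left 1 ((2 : ℝ) ^ β)]
  · have := add_one_rpow_sub_two_rpow_le hβ hσ
    have := mul_le_mul_of_nonneg_right hβγ hI
    linarith [le_max_right 1 ((2 : ℝ) ^ β)]

theorem integral_add_one_rpow_le_of_le_one {s : ℝ} (hs₀ : 0 ≤ s) (hs₁ : s ≤ 1) :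
    ∫ σ in (0 : ℝ)..s, (σ + 1) ^ β ≤ max 1 (2 ^ β) * s := by
  calc ∫ σ in (0 : ℝ)..s, (σ + 1) ^ β
      ≤ ∫ _ in (0 : ℝ)..s, max 1 (2 ^ β) :=
        integral_mono_on hs₀ (intervalIntegrable_add_one_rpow le_rfl hs₀)
          intervalIntegrable_const fun σ hσ =>
            add_one_rpow_le_max_one_two_rpow hσ.1 (hσ.2.trans hs₁)
    _ = max 1 (2 ^ β) * s := by simp [mul_comm]

theorem integral_add_one_rpow_le (hβγ : β ≤ γ) (hγ : 0 ≤ γ) {s : ℝ} (hs : 0 < s) :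
    ∫ σ in (0 : ℝ)..s, (σ + 1) ^ β ≤
      γ * (∫ σ in (1 : ℝ)..s, ∫ τ in (1 : ℝ)..σ, (τ + 1) ^ β / τ) + max 1 (2 ^ β) * (s + 1) := by
  set C : ℝ := max 1 (2 ^ β)
  have hG : 0 ≤ ∫ σ in (1 : ℝ)..s, ∫ τ in (1 : ℝ)..σ, (τ + 1) ^ β / τ := by
    refine integral_integral_nonneg fun τ hτ => ?_
    have : 0 < τ := (lt_min one_pos hs).trans_le hτ.1
    positivity
  have hγG := mul_nonneg hγ hG
  have hC : 0 ≤ C := zero_le_one.trans (le_max_left _ _)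
  rcases le_total s 1 with hs₁ | hs₁
  · have := integral_add_one_rpow_le_of_le_one (β := β) hs.le hs₁
    linarith
  have hprimitive : IntervalIntegrable (fun σ => ∫ τ in (1 : ℝ)..σ, (τ + 1) ^ β / τ) volume 1 s :=
    (continuousOn_primitive_interval' (intervalIntegrable_add_one_rpow_div one_pos hs)
      Set.left_mem_uIcc).intervalIntegrable
  have hsplit := integral_add_adjacent_intervals (intervalIntegrable_add_one_rpow (β := β)
    le_rfl zero_le_one) (intervalIntegrable_add_one_rpow zero_le_one hs.le)
  have h01 := integral_add_one_rpow_le_of_le_one (β := β) zero_le_one le_rfl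
  have h1s : ∫ σ in (1 : ℝ)..s, (σ + 1) ^ β ≤
      ∫ σ in (1 : ℝ)..s, (γ * (∫ τ in (1 : ℝ)..σ, (τ + 1) ^ β / τ) + C) :=
    integral_mono_on hs₁ (intervalIntegrable_add_one_rpow zero_le_one hs.le)
      ((hprimitive.const_mul γ).add intervalIntegrable_const) fun σ hσ =>
        add_one_rpow_le_mul_integral_add hβγ hγ hσ.1
  rw [integral_add (hprimitive.const_mul γ) intervalIntegrable_const,
    intervalIntegral.integral_const_mul, intervalIntegral.integral_const, smul_eq_mul] at h1s
  linarith

end AddOneRpow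

theorem rpow_neg_div_mul_rpow_sub_one (p q : ℝ) {τ : ℝ} (hτ : 0 < τ + 1) :
    (τ + 1) ^ (-p) / (τ * (τ + 1) ^ (q - 1)) = (τ + 1) ^ (1 - (p + q)) / τ := by
  rw [mul_comm, ← div_div, ← Real.rpow_sub hτ]
  ring_nf

theorem stmt1_general (n : ℕ) (hn : 3 ≤ n) (p q : ℝ)
    (hpq : 2 / (n : ℝ) < p + q)
    (φ ψ G H : ℝ → ℝ)
    (hφ : ∀ s, φ s = (s + 1) ^ (-p))
    (hψ : ∀ s, ψ s = s * (s + 1) ^ (q - 1))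
    (hG : ∀ s, G s = ∫ σ in (1:ℝ)..s, ∫ τ in (1:ℝ)..σ, φ τ / ψ τ)
    (hH : ∀ s, H s = ∫ σ in (0:ℝ)..s, σ * φ σ / ψ σ) :
    ∃ γ ∈ Set.Ioo (0:ℝ) (((n : ℝ) - 2) / n), ∃ b > (0:ℝ),
      ∀ s > (0:ℝ), H s ≤ γ * G s + b * (s + 1) := by
  have hn' : (3 : ℝ) ≤ n := by exact_mod_cast hn
  have hγ₀ : 0 < ((n : ℝ) - 2) / (2 * n) := div_pos (by linarith) (by linarith)
  refine ⟨max (1 - (p + q)) ((n - 2) / (2 * n)), ⟨lt_max_of_lt_right hγ₀, max_lt ?_ ?_⟩,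
    max 1 (2 ^ (1 - (p + q))), lt_max_of_lt_left one_pos, fun s hs => ?_⟩
  · rw [sub_div, div_self (by positivity)]
    linarith
  · exact div_lt_div_of_pos_left (by linarith) (by positivity) (by linarith)
  have hHs : H s = ∫ σ in (0 : ℝ)..s, (σ + 1) ^ (1 - (p + q)) := by
    rw [hH]
    refine integral_congr_uIoo fun σ hσ => ?_
    rw [Set.uIoo_of_le hs.le] at hσ
    have hσ₁ : 0 < σ + 1 := by linarith [hσ.1]
    simp only [hφ, hψ, mul_div_assoc, rpow_neg_div_mul_rpow_sub_one p q hσ₁,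
      mul_div_cancel₀ _ hσ.1.ne']
  have hGs : G s = ∫ σ in (1 : ℝ)..s, ∫ τ in (1 : ℝ)..σ, (τ + 1) ^ (1 - (p + q)) / τ := by
    rw [hG]
    refine integral_congr fun σ hσ => integral_congr fun τ hτ => ?_
    have hσ₀ : 0 < σ := (lt_min one_pos hs).trans_le hσ.1
    have : 0 < τ := (lt_min one_pos hσ₀).trans_le hτ.1
    simp only [hφ, hψ, rpow_neg_div_mul_rpow_sub_one p q (by linarith : 0 < τ + 1)]
  rw [hHs, hGs]
  exact integral_add_one_rpow_le (le_max_left _ _) (hγ₀.le.trans (le_max_right _ _)) hs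

theorem stmt1 (n : ℕ) (hn : 3 ≤ n) (p q : ℝ) (hp : p ≤ 0)
    (hpq : 2 / (n : ℝ) < p + q)
    (φ ψ G H : ℝ → ℝ)
    (hφ : ∀ s, φ s = (s + 1) ^ (-p))
    (hψ : ∀ s, ψ s = s * (s + 1) ^ (q - 1))
    (hG : ∀ s, G s = ∫ σ in (1:ℝ)..s, ∫ τ in (1:ℝ)..σ, φ τ / ψ τ)
    (hH : ∀ s, H s = ∫ σ in (0:ℝ)..s, σ * φ σ / ψ σ) :
    ∃ γ ∈ Set.Ioo (0:ℝ) (((n : ℝ) - 2) / n), ∃ b > (0:ℝ),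
      ∀ s > (0:ℝ), H s ≤ γ * G s + b * (s + 1) :=
  stmt1_general n hn p q hpq φ ψ G H hφ hψ hG hH
end

section
/- Let γ > 0 and for k ∈ ℕ, k ≥ 1, define on the disc Ω = B(0,R) ⊂ ℝ² the functions w_k(x) := ln((1/k)²/((1/k)² + π|x|²)²). Then ∫_Ω |∇w_k|² dx = 32π·ln k + O(1) as k → ∞, i.e. there is C > 0 with |∫_Ω |∇w_k|² dx − 32π·ln k| ≤ C for all k. -/
/-!
Each `w_k` is radial, `w_k(x) = φ(|x|²)` with `φ(t) = log (ε² / (ε² + π t)²)`, so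
`|∇w_k|² = 4 φ'(|x|²)² |x|² = 16 π² |x|² / (ε² + π |x|²)²`. Polar coordinates and an explicit
primitive give the exact energy `16 π (log (ε² + π R²) - log ε² - π R² / (ε² + π R²))`. With
`ε = 1/k` the term `-16 π log ε²` is `32 π log k`, and the rest is bounded uniformly in `ε ≤ 1`.
-/

open MeasureTheory Real Set Metric Module

section Radial

variable {E : Type*} [NormedAddCommGroup E] [InnerProductSpace ℝ E] [CompleteSpace E]

theorem hasGradientAt_comp_norm_sq {φ : ℝ → ℝ} {φ' : ℝ} {x : E}
    (hφ : HasDerivAt φ φ' (‖x‖ ^ 2)) :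
    HasGradientAt (fun y ↦ φ (‖y‖ ^ 2)) ((2 * φ') • x) x := by
  rw [hasGradientAt_iff_hasFDerivAt]
  refine (hφ.hasFDerivAt.comp x (hasStrictFDerivAt_norm_sq x).hasFDerivAt).congr_fderiv ?_
  ext y
  simp only [ContinuousLinearMap.comp_smul, smul_apply, ContinuousLinearMap.comp_apply,
    coe_innerSL_apply, ContinuousLinearMap.toSpanSingleton_apply, smul_eq_mul, nsmul_eq_mul,
    Nat.cast_ofNat, map_smul, InnerProductSpace.toDual_apply_apply]
  ring

theorem norm_gradient_comp_norm_sq_sq {φ : ℝ → ℝ} {φ' : ℝ} {x : E}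
    (hφ : HasDerivAt φ φ' (‖x‖ ^ 2)) :
    ‖gradient (fun y ↦ φ (‖y‖ ^ 2)) x‖ ^ 2 = 4 * φ' ^ 2 * ‖x‖ ^ 2 := by
  rw [(hasGradientAt_comp_norm_sq hφ).gradient, norm_smul, mul_pow, Real.norm_eq_abs, sq_abs]
  ring

end Radial

section Planar

variable {E : Type*} [NormedAddCommGroup E] [InnerProductSpace ℝ E] [FiniteDimensional ℝ E]
  [MeasurableSpace E] [BorelSpace E]

theorem integral_ball_fun_norm_of_finrank_eq_two (hE : finrank ℝ E = 2) (f : ℝ → ℝ) {R : ℝ}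
    (hR : 0 ≤ R) :
    ∫ x in ball (0 : E) R, f ‖x‖ = 2 * π * ∫ r in (0)..R, r * f r := by
  have : Nontrivial E := Module.nontrivial_of_finrank_eq_succ hE
  have hball : volume.real (ball (0 : E) 1) = π := by
    simp [measureReal_def, InnerProductSpace.volume_ball_of_dim_even (k := 1) hE, pi_nonneg]
  rw [← integral_indicator measurableSet_ball]
  have hind : (ball (0 : E) R).indicator (fun x ↦ f ‖x‖) = fun x ↦ (Iio R).indicator f ‖x‖ := by
    ext x
    simp [indicator]
  rw [hind, integral_fun_norm_addHaar, hE, hball]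
  have hradial : (fun r : ℝ ↦ r ^ (2 - 1) • (Iio R).indicator f r) =
      (Iio R).indicator (fun r ↦ r * f r) := by
    ext r
    by_cases h : r < R <;> simp [indicator, h]
  rw [hradial, setIntegral_indicator measurableSet_Iio, Ioi_inter_Iio,
    intervalIntegral.integral_of_le hR, integral_Ioc_eq_integral_Ioo]
  simp only [nsmul_eq_mul, smul_eq_mul]
  ring

/-- With `a = ε²` and `t = |x|²` this is the paper's `w`. -/
noncomputable def logBubble (a t : ℝ) : ℝ := log (a / (a + π * t) ^ 2)

theorem hasDerivAt_logBubble {a t : ℝ} (ha : 0 < a) (ht : 0 ≤ t) :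
    HasDerivAt (logBubble a) (-(2 * π) / (a + π * t)) t := by
  have hd : 0 < a + π * t := by positivity
  have hlin : HasDerivAt (fun s ↦ a + π * s) π t := by
    simpa using ((hasDerivAt_id t).const_mul π).const_add a
  have hq := ((hasDerivAt_const t a).fun_div (hlin.fun_pow 2) (pow_pos hd 2).ne').log
    (div_pos ha (pow_pos hd 2)).ne'
  refine hq.congr_deriv ?_
  field_simp
  ring

theorem hasDerivAt_logBubble_energy_primitive {a r : ℝ} (ha : 0 < a) :
    HasDerivAt (fun s ↦ 8 * (log (a + π * s ^ 2) - π * s ^ 2 / (a + π * s ^ 2)))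
      (r * (16 * π ^ 2 * r ^ 2 / (a + π * r ^ 2) ^ 2)) r := by
  have hd : 0 < a + π * r ^ 2 := by positivity
  have hq : HasDerivAt (fun s ↦ π * s ^ 2) (2 * π * r) r := by
    simpa [mul_comm, mul_left_comm] using (hasDerivAt_pow 2 r).const_mul π
  have hden := hq.const_add a
  refine (((hden.log hd.ne').sub (hq.div hden hd.ne')).const_mul 8).congr_deriv ?_
  field_simp
  ring

theorem integral_ball_norm_gradient_logBubble_sq (hE : finrank ℝ E = 2) {a R : ℝ} (ha : 0 < a)
    (hR : 0 ≤ R) :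
    ∫ x in ball (0 : E) R, ‖gradient (fun x ↦ logBubble a (‖x‖ ^ 2)) x‖ ^ 2 =
      16 * π * (log (a + π * R ^ 2) - log a - π * R ^ 2 / (a + π * R ^ 2)) := by
  have hpointwise : ∀ x : E, ‖gradient (fun x ↦ logBubble a (‖x‖ ^ 2)) x‖ ^ 2 =
      16 * π ^ 2 * ‖x‖ ^ 2 / (a + π * ‖x‖ ^ 2) ^ 2 := fun x ↦ by
    rw [norm_gradient_comp_norm_sq_sq (hasDerivAt_logBubble ha (by positivity)), div_pow]
    ring
  simp_rw [hpointwise]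
  rw [integral_ball_fun_norm_of_finrank_eq_two hE
      (fun r ↦ 16 * π ^ 2 * r ^ 2 / (a + π * r ^ 2) ^ 2) hR,
    intervalIntegral.integral_eq_sub_of_hasDerivAt
      (fun r _ ↦ hasDerivAt_logBubble_energy_primitive ha) (by
        apply Continuous.intervalIntegrable
        fun_prop (disch := exact fun r ↦ by positivity))]
  simp only [ne_eq, OfNat.ofNat_ne_zero, not_false_eq_true, zero_pow, mul_zero, add_zero,
    zero_div, sub_zero]
  ring

end Planar

theorem abs_log_add_sub_div_le {a b : ℝ} (ha : 0 < a) (ha1 : a ≤ 1) (hb : 0 < b) :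
    |log (a + b) - b / (a + b)| ≤ max |log b| |log (1 + b)| + 1 := by
  have hlog : |log (a + b)| ≤ max |log b| |log (1 + b)| :=
    abs_le_max_abs_abs (log_le_log hb (by linarith)) (log_le_log (by positivity) (by linarith))
  have hfrac : |b / (a + b)| ≤ 1 := by
    rw [abs_of_pos (by positivity)]
    exact div_le_one_of_le₀ (by linarith) (by positivity)
  exact (abs_sub _ _).trans (add_le_add hlog hfrac)

theorem stmt13_general (R : ℝ) (hR : 0 < R)
    (w : ℕ → EuclideanSpace ℝ (Fin 2) → ℝ)
    (hw : ∀ k : ℕ, ∀ x, w k x =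
      Real.log ((1 / (k : ℝ)) ^ 2 / ((1 / (k : ℝ)) ^ 2 + π * ‖x‖ ^ 2) ^ 2)) :
    ∃ C > (0:ℝ), ∀ k : ℕ, 1 ≤ k →
      |(∫ x in Metric.ball (0 : EuclideanSpace ℝ (Fin 2)) R, ‖gradient (w k) x‖ ^ 2)
        - 32 * π * Real.log k| ≤ C := by
  refine ⟨16 * π * (max |log (π * R ^ 2)| |log (1 + π * R ^ 2)| + 1), by positivity,
    fun k hk ↦ ?_⟩
  have hk : (1 : ℝ) ≤ k := by exact_mod_cast hk
  set a : ℝ := (1 / (k : ℝ)) ^ 2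
  have ha : 0 < a := by positivity
  have ha1 : a ≤ 1 := pow_le_one₀ (by positivity) (div_le_one_of_le₀ hk (by positivity))
  have hloga : log a = -(2 * log k) := by simp [a, Real.log_pow, Real.log_inv]
  have hwk : w k = fun x ↦ logBubble a (‖x‖ ^ 2) := funext (hw k)
  rw [hwk, integral_ball_norm_gradient_logBubble_sq finrank_euclideanSpace_fin ha hR.le, hloga]
  calc _ = |16 * π * (log (a + π * R ^ 2) - π * R ^ 2 / (a + π * R ^ 2))| := by ring_nf
    _ = 16 * π * |log (a + π * R ^ 2) - π * R ^ 2 / (a + π * R ^ 2)| := by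
        rw [abs_mul, abs_of_pos (by positivity)]
    _ ≤ _ := by
        gcongr
        exact abs_log_add_sub_div_le ha ha1 (by positivity)

theorem stmt13 (γ R : ℝ) (hγ : 0 < γ) (hR : 0 < R)
    (w : ℕ → EuclideanSpace ℝ (Fin 2) → ℝ)
    (hw : ∀ k : ℕ, ∀ x, w k x =
      Real.log ((1 / (k : ℝ)) ^ 2 / ((1 / (k : ℝ)) ^ 2 + π * ‖x‖ ^ 2) ^ 2)) :
    ∃ C > (0:ℝ), ∀ k : ℕ, 1 ≤ k →
      |(∫ x in Metric.ball (0 : EuclideanSpace ℝ (Fin 2)) R, ‖gradient (w k) x‖ ^ 2)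
        - 32 * π * Real.log k| ≤ C :=
  stmt13_general R hR w hw
end
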